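/- arXiv:1905.10097 — 2 statements merged into one kernel-verified Lean document; each statement's English description precedes it below -/
import Mathlib

section
/- For a continuous semiflow, a compact set M is invariant (ζ_t(M) = M for all t ≥ 0) if and only if every point of M has a complete orbit contained in M, i.e., a continuous map θ : ℝ → M with θ(0) = x and ζ_t(θ(s)) = θ(t+s) for all s ∈ ℝ and t ≥ 0. -/
/-- For a continuous semiflow, a compact set `M` is invariant
(`ζ_t(M) = M` for all `t ≥ 0`) iff every point of `M` has a complete orbit
contained in `M`. -/
theorem invariant_iff_complete_orbits
    {X : Type*} [MetricSpace X] (ζ : ℝ → X → X)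
    (hζ0 : ζ 0 = id)
    (hζadd : ∀ t s : ℝ, 0 ≤ t → 0 ≤ s → ∀ x, ζ (t + s) x = ζ t (ζ s x))
    (hζcont : ContinuousOn (fun p : ℝ × X => ζ p.1 p.2)
      (Set.Ici (0 : ℝ) ×ˢ Set.univ))
    (M : Set X) (hMcomp : IsCompact M) :
    (∀ t : ℝ, 0 ≤ t → ζ t '' M = M) ↔
    (∀ x ∈ M, ∃ θ : ℝ → X, Continuous θ ∧ (∀ s : ℝ, θ s ∈ M) ∧ θ 0 = x ∧
      ∀ (s : ℝ) (t : ℝ), 0 ≤ t → ζ t (θ s) = θ (t + s)) := by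
  have contAt : ∀ (t : ℝ), 0 < t → ∀ x : X,
      ContinuousAt (fun p : ℝ × X => ζ p.1 p.2) (t, x) := by
    intro t ht x
    exact hζcont.continuousAt (prod_mem_nhds (Ici_mem_nhds ht) Filter.univ_mem)
  have hcont1 : Continuous (ζ 1) := by
    rw [continuous_iff_continuousAt]
    intro y
    exact (contAt 1 one_pos y).comp ((Continuous.prodMk_right (1 : ℝ)).continuousAt)
  constructor
  · intro hinv x hx
    have hMsub : ∀ t : ℝ, 0 ≤ t → ∀ y ∈ M, ζ t y ∈ M := by
      intro t ht y hy
      rw [← hinv t ht]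
      exact Set.mem_image_of_mem _ hy
    set C : ℕ → Set (ℕ → X) := fun j =>
      {f | (∀ n, f n ∈ M) ∧ f 0 = x ∧ ∀ k < j, ζ 1 (f (k + 1)) = f k} with hC
    have hCclosed : ∀ j, IsClosed (C j) := by
      intro j
      have : C j = (⋂ n, (fun f : ℕ → X => f n) ⁻¹' M) ∩
          ({f : ℕ → X | f 0 = x} ∩ ⋂ k ∈ Set.Iio j, {f : ℕ → X | ζ 1 (f (k + 1)) = f k}) := by
        ext f
        simp [hC, Set.mem_iInter, and_assoc]
      rw [this]
      refine IsClosed.inter (isClosed_iInter fun n =>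
        hMcomp.isClosed.preimage (continuous_apply n)) (IsClosed.inter ?_ ?_)
      · exact isClosed_eq (continuous_apply 0) continuous_const
      · exact isClosed_biInter fun k _ =>
          isClosed_eq (hcont1.comp (continuous_apply (k + 1))) (continuous_apply k)
    have hCsub : ∀ j, C (j + 1) ⊆ C j := by
      rintro j f ⟨h1, h2, h3⟩
      exact ⟨h1, h2, fun k hk => h3 k (Nat.lt_succ_of_lt hk)⟩
    have hCne : ∀ j, (C j).Nonempty := by
      intro j
      obtain ⟨y, hyM, hyx⟩ : ∃ y ∈ M, ζ (j : ℝ) y = x := by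
        have h := hinv (j : ℝ) (Nat.cast_nonneg j)
        rw [← h] at hx
        exact hx
      refine ⟨fun k => ζ ((j - k : ℕ) : ℝ) y,
        fun n => hMsub _ (Nat.cast_nonneg _) y hyM, by simpa using hyx, ?_⟩
      intro k hk
      have h1 : ((j - k : ℕ) : ℝ) = 1 + ((j - (k + 1) : ℕ) : ℝ) := by
        have h2 : j - k = (j - (k + 1)) + 1 := by omega
        rw [h2]; push_cast; ring
      rw [← hζadd 1 _ zero_le_one (Nat.cast_nonneg _), ← h1]
    have hInter : (⋂ j, C j).Nonempty := by
      refine IsCompact.nonempty_iInter_of_sequence_nonempty_isCompact_isClosed C hCsub hCne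
        ?_ hCclosed
      refine IsCompact.of_isClosed_subset (isCompact_univ_pi fun _ : ℕ => hMcomp)
        (hCclosed 0) ?_
      intro f hf
      simp only [Set.mem_univ_pi]
      exact hf.1
    obtain ⟨f, hf⟩ := hInter
    simp only [Set.mem_iInter] at hf
    have hfM : ∀ n, f n ∈ M := (hf 0).1
    have hf0 : f 0 = x := (hf 0).2.1
    have hfstep : ∀ k, ζ 1 (f (k + 1)) = f k := fun k =>
      (hf (k + 1)).2.2 k (Nat.lt_succ_self k)
    have hchain : ∀ n k : ℕ, ζ (k : ℝ) (f (n + k)) = f n := by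
      intro n k
      induction k with
      | zero => simp [hζ0]
      | succ k ih =>
        have hc : ((k + 1 : ℕ) : ℝ) = (k : ℝ) + 1 := by push_cast; ring
        rw [hc, hζadd (k : ℝ) 1 (Nat.cast_nonneg _) zero_le_one]
        have : f (n + (k + 1)) = f ((n + k) + 1) := by ring_nf
        rw [this, hfstep (n + k), ih]
    have hwd : ∀ (s : ℝ) (n m : ℕ), -s ≤ (n : ℝ) → n ≤ m →
        ζ (s + m) (f m) = ζ (s + n) (f n) := by
      intro s n m hn hnm
      obtain ⟨k, rfl⟩ := Nat.exists_eq_add_of_le hnm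
      have hcast : (s + ((n + k : ℕ) : ℝ)) = (s + n) + k := by push_cast; ring
      rw [hcast, hζadd (s + n) k (by linarith) (Nat.cast_nonneg k), hchain n k]
    set θ : ℝ → X := fun s => ζ (s + ⌈-s⌉₊) (f ⌈-s⌉₊) with hθdef
    have hceil : ∀ s : ℝ, -s ≤ (⌈-s⌉₊ : ℝ) := fun s => Nat.le_ceil _
    have hθeq : ∀ (s : ℝ) (m : ℕ), -s ≤ (m : ℝ) → θ s = ζ (s + m) (f m) := by
      intro s m hm
      rcases le_total ⌈-s⌉₊ m with h | h
      · exact (hwd s ⌈-s⌉₊ m (hceil s) h).symm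
      · exact hwd s m ⌈-s⌉₊ hm h
    refine ⟨θ, ?_, ?_, ?_, ?_⟩
    · rw [continuous_iff_continuousAt]
      intro s₀
      set m : ℕ := ⌈-s₀⌉₊ + 2 with hm
      have hc₀ := hceil s₀
      have hmR : ((m : ℕ) : ℝ) = (⌈-s₀⌉₊ : ℝ) + 2 := by rw [hm]; push_cast; ring
      have heq : ∀ s ∈ Set.Ioo (s₀ - 1) (s₀ + 1), θ s = ζ (s + m) (f m) := by
        intro s hs
        apply hθeq
        rw [hmR]
        linarith [hs.1]
      have hpos : 0 < s₀ + m := by rw [hmR]; linarith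
      have hca : ContinuousAt (fun s : ℝ => ζ (s + m) (f m)) s₀ := by
        have h1 : Continuous (fun s : ℝ => ((s + m : ℝ), f m)) :=
          (continuous_id.add continuous_const).prodMk continuous_const
        show ContinuousAt ((fun p : ℝ × X => ζ p.1 p.2) ∘ fun s : ℝ => ((s + m : ℝ), f m)) s₀
        exact ContinuousAt.comp (contAt (s₀ + m) hpos (f m)) h1.continuousAt
      refine hca.congr ?_
      exact Filter.eventuallyEq_of_mem (Ioo_mem_nhds (by linarith) (by linarith))
        (fun s hs => (heq s hs).symm)
    · intro s
      have := hceil s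
      exact hMsub _ (by linarith) _ (hfM _)
    · have : θ 0 = ζ (0 + ⌈-(0:ℝ)⌉₊) (f ⌈-(0:ℝ)⌉₊) := rfl
      rw [this]
      simp [hζ0, hf0]
    · intro s t ht
      have hn := hceil s
      have h0 : 0 ≤ s + (⌈-s⌉₊ : ℝ) := by linarith
      have hts : θ s = ζ (s + ⌈-s⌉₊) (f ⌈-s⌉₊) := rfl
      rw [hts, hθeq (t + s) ⌈-s⌉₊ (by linarith), ← hζadd t (s + ⌈-s⌉₊) ht h0]
      ring_nf
  · intro horb t ht
    apply Set.Subset.antisymm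
    · rintro _ ⟨y, hy, rfl⟩
      obtain ⟨θ, _, hθM, hθ0, hθζ⟩ := horb y hy
      have h := hθζ 0 t ht
      rw [hθ0, add_zero] at h
      rw [h]
      exact hθM t
    · intro y hy
      obtain ⟨θ, _, hθM, hθ0, hθζ⟩ := horb y hy
      refine ⟨θ (-t), hθM _, ?_⟩
      have h := hθζ (-t) t ht
      rw [add_neg_cancel] at h
      rw [h, hθ0]
end

section
/- Let S(t,s) be a process on a Banach space and B a bounded set such that all pullback omega-limit sets O(B,t) are contained in a fixed compact set M and pullback attract B (lim_{s→−∞} dist(S(t,s)B, O(B,t)) = 0). If each map S(t,s) is continuous, then S(t,s) O(B,s) ⊆ O(B,t) for t ≥ s. -/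
open Filter Metric Bornology

theorem Filter.Tendsto.process_apply_of_tendsto_atBot {X ι : Type*} [TopologicalSpace X]
    {S : ℝ → ℝ → X → X}
    (hcomp : ∀ t l s : ℝ, s ≤ l → l ≤ t → ∀ x, S t s x = S t l (S l s x))
    {t s : ℝ} (hst : s ≤ t) (hcont : Continuous (S t s))
    {l : Filter ι} {sn : ι → ℝ} {xn : ι → X} {y : X}
    (hy : Tendsto (fun n => S s (sn n) (xn n)) l (nhds y)) (hsn : Tendsto sn l atBot) :
    Tendsto (fun n => S t (sn n) (xn n)) l (nhds (S t s y)) := by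
  refine ((hcont.tendsto y).comp hy).congr' ?_
  filter_upwards [hsn.eventually (eventually_le_atBot s)] with n hn
  exact (hcomp t s (sn n) hn hst (xn n)).symm

theorem pullback_omega_limit_invariance_general
    {X : Type*} [NormedAddCommGroup X]
    (S : ℝ → ℝ → X → X)
    (hcomp : ∀ t l s : ℝ, s ≤ l → l ≤ t → ∀ x, S t s x = S t l (S l s x))
    (hcont : ∀ t s : ℝ, Continuous (S t s))
    (B : Set X)
    (O : ℝ → Set X)
    (hO : ∀ t : ℝ, O t = {x : X | ∃ (sn : ℕ → ℝ) (xn : ℕ → X),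
      Tendsto sn atTop atBot ∧ (∀ n, xn n ∈ B) ∧
      Tendsto (fun n => S t (sn n) (xn n)) atTop (nhds x)}) :
    ∀ t s : ℝ, s ≤ t → S t s '' O s ⊆ O t := by
  rintro t s hst _ ⟨y, hy, rfl⟩
  rw [hO s] at hy
  obtain ⟨sn, xn, hsn, hxn, hlim⟩ := hy
  rw [hO t]
  exact ⟨sn, xn, hsn, hxn, hlim.process_apply_of_tendsto_atBot hcomp hst (hcont t s) hsn⟩

/-- For a process with continuous maps, pullback omega-limit sets of a bounded
set `B` contained in a fixed compact set satisfy `S(t,s) O(B,s) ⊆ O(B,t)` for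
`t ≥ s`. -/
theorem pullback_omega_limit_invariance
    {X : Type*} [NormedAddCommGroup X]
    (S : ℝ → ℝ → X → X)
    (hid : ∀ t : ℝ, S t t = id)
    (hcomp : ∀ t l s : ℝ, s ≤ l → l ≤ t → ∀ x, S t s x = S t l (S l s x))
    (hcont : ∀ t s : ℝ, Continuous (S t s))
    (B M : Set X) (hB : IsBounded B) (hMcomp : IsCompact M)
    (O : ℝ → Set X)
    (hO : ∀ t : ℝ, O t = {x : X | ∃ (sn : ℕ → ℝ) (xn : ℕ → X),
      Tendsto sn atTop atBot ∧ (∀ n, xn n ∈ B) ∧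
      Tendsto (fun n => S t (sn n) (xn n)) atTop (nhds x)})
    (hOM : ∀ t : ℝ, O t ⊆ M)
    (hattr : ∀ t : ℝ,
      Tendsto (fun s : ℝ => ⨆ x ∈ B, infDist (S t s x) (O t)) atBot (nhds 0)) :
    ∀ t s : ℝ, s ≤ t → S t s '' O s ⊆ O t :=
  pullback_omega_limit_invariance_general S hcomp hcont B O hO
end
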